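/- arXiv:0909.5457 — 2 statements merged into one kernel-verified Lean document; each statement's English description precedes it below -/
import Mathlib

section
/- Let A : ℝ^{m×n} → ℝ^d be a linear map with rank-2k restricted isometry constant δ_{2k}, i.e., (1-δ_{2k})‖Z‖_F² ≤ ‖A(Z)‖² ≤ (1+δ_{2k})‖Z‖_F² for all Z of rank at most 2k. Let ψ(X) = ½‖A(X) - b‖². Suppose X^t and X* both have rank at most k, and X^{t+1} = P_k(X^t - (1/(1+δ_{2k})) A^T(A(X^t)-b)) where P_k is the Frobenius-norm projection onto matrices of rank at most k. Then ψ(X^{t+1}) ≤ ψ(X*) + (δ_{2k}/(1-δ_{2k}))·‖A(X* - X^t)‖². -/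
open scoped BigOperators RealInnerProductSpace

/-- Squared Frobenius norm. -/
noncomputable def froSq {m n : ℕ} (X : Matrix (Fin m) (Fin n) ℝ) : ℝ :=
  ∑ i, ∑ j, (X i j) ^ 2

/-- Frobenius norm. -/
noncomputable def fro {m n : ℕ} (X : Matrix (Fin m) (Fin n) ℝ) : ℝ :=
  Real.sqrt (froSq X)

/-- Trace (Frobenius) inner product. -/
noncomputable def frobInner {m n : ℕ} (X Y : Matrix (Fin m) (Fin n) ℝ) : ℝ :=
  ∑ i, ∑ j, X i j * Y i j

lemma froSq_nonneg {m n : ℕ} (X : Matrix (Fin m) (Fin n) ℝ) : 0 ≤ froSq X := by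
  unfold froSq; positivity

lemma rank_sub_le_aux {m n : ℕ} (X Y : Matrix (Fin m) (Fin n) ℝ) :
    (X - Y).rank ≤ X.rank + Y.rank := by
  classical
  unfold Matrix.rank
  have hle : LinearMap.range (X - Y).mulVecLin ≤
      LinearMap.range X.mulVecLin ⊔ LinearMap.range Y.mulVecLin := by
    rintro w ⟨v, rfl⟩
    have : (X - Y).mulVecLin v = X.mulVecLin v - Y.mulVecLin v := by
      simp [Matrix.sub_mulVec, Matrix.mulVecLin]
    rw [this]
    exact sub_mem (Submodule.mem_sup_left ⟨v, rfl⟩) (Submodule.mem_sup_right ⟨v, rfl⟩)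
  exact (Submodule.finrank_mono hle).trans
    (Submodule.finrank_add_le_finrank_add_finrank _ _)

lemma froSq_shift {m n : ℕ} (η : ℝ) (g Xt X : Matrix (Fin m) (Fin n) ℝ) :
    froSq (Xt - η • g - X) =
      froSq (X - Xt) + 2 * η * frobInner g (X - Xt) + η ^ 2 * froSq g := by
  simp only [froSq, frobInner, Matrix.sub_apply, Matrix.smul_apply, smul_eq_mul,
    Finset.mul_sum, ← Finset.sum_add_distrib]
  refine Finset.sum_congr rfl fun i _ => Finset.sum_congr rfl fun j _ => by ring

theorem svp_one_step_bound {m n d k : ℕ} (δ : ℝ) (hδ0 : 0 ≤ δ) (hδ1 : δ < 1)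
    (A : Matrix (Fin m) (Fin n) ℝ →ₗ[ℝ] EuclideanSpace ℝ (Fin d))
    (AT : EuclideanSpace ℝ (Fin d) →ₗ[ℝ] Matrix (Fin m) (Fin n) ℝ)
    (hAT : ∀ (X : Matrix (Fin m) (Fin n) ℝ) (v : EuclideanSpace ℝ (Fin d)),
      ⟪A X, v⟫ = frobInner (AT v) X)
    (hRIP : ∀ Z : Matrix (Fin m) (Fin n) ℝ, Z.rank ≤ 2 * k →
      (1 - δ) * froSq Z ≤ ‖A Z‖ ^ 2 ∧ ‖A Z‖ ^ 2 ≤ (1 + δ) * froSq Z)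
    (b : EuclideanSpace ℝ (Fin d))
    (Xstar Xt Xnext : Matrix (Fin m) (Fin n) ℝ)
    (hstar : Xstar.rank ≤ k) (ht : Xt.rank ≤ k)
    (hnext_rank : Xnext.rank ≤ k)
    (hnext_proj : ∀ Z : Matrix (Fin m) (Fin n) ℝ, Z.rank ≤ k →
      fro (Xt - (1 / (1 + δ)) • AT (A Xt - b) - Xnext) ≤
        fro (Xt - (1 / (1 + δ)) • AT (A Xt - b) - Z)) :
    (1 / 2) * ‖A Xnext - b‖ ^ 2 ≤
      (1 / 2) * ‖A Xstar - b‖ ^ 2 + (δ / (1 - δ)) * ‖A (Xstar - Xt)‖ ^ 2 := by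
  set g : Matrix (Fin m) (Fin n) ℝ := AT (A Xt - b) with hg
  set η : ℝ := 1 / (1 + δ) with hηdef
  have h1δ : (0 : ℝ) < 1 - δ := by linarith
  have h1δ' : (0 : ℝ) < 1 + δ := by linarith
  have hη : η * (1 + δ) = 1 := by
    rw [hηdef]; field_simp
  -- quadratic expansion of the objective
  have hexp : ∀ X : Matrix (Fin m) (Fin n) ℝ,
      ‖A X - b‖ ^ 2 = ‖A Xt - b‖ ^ 2 + 2 * frobInner g (X - Xt) + ‖A (X - Xt)‖ ^ 2 := by
    intro X
    have hdecomp : A X - b = (A Xt - b) + A (X - Xt) := by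
      rw [map_sub]; abel
    rw [hdecomp, norm_add_sq_real, real_inner_comm, hAT]
  -- rank bounds
  have hrankS : (Xstar - Xt).rank ≤ 2 * k := by
    have := rank_sub_le_aux Xstar Xt; omega
  have hrankN : (Xnext - Xt).rank ≤ 2 * k := by
    have := rank_sub_le_aux Xnext Xt; omega
  obtain ⟨hRS, -⟩ := hRIP _ hrankS
  obtain ⟨-, hRN⟩ := hRIP _ hrankN
  -- projection inequality, squared
  have hproj := hnext_proj Xstar hstar
  have hprojSq : froSq (Xt - η • g - Xnext) ≤ froSq (Xt - η • g - Xstar) := by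
    have h1 : froSq (Xt - η • g - Xnext) = fro (Xt - η • g - Xnext) ^ 2 := by
      rw [fro, Real.sq_sqrt (froSq_nonneg _)]
    have h2 : froSq (Xt - η • g - Xstar) = fro (Xt - η • g - Xstar) ^ 2 := by
      rw [fro, Real.sq_sqrt (froSq_nonneg _)]
    rw [h1, h2]
    exact pow_le_pow_left₀ (Real.sqrt_nonneg _) hproj 2
  rw [froSq_shift, froSq_shift] at hprojSq
  set N := froSq (Xnext - Xt)
  set S := froSq (Xstar - Xt)
  set cN := frobInner g (Xnext - Xt)
  set cS := frobInner g (Xstar - Xt)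
  -- P : N + 2η cN ≤ S + 2η cS
  have P : N + 2 * η * cN ≤ S + 2 * η * cS := by linarith
  have P' : (1 + δ) / 2 * N + cN ≤ (1 + δ) / 2 * S + cS := by
    have h := mul_le_mul_of_nonneg_left P (by positivity : (0:ℝ) ≤ (1 + δ) / 2)
    have e1 : (1 + δ) / 2 * (N + 2 * η * cN) = (1 + δ) / 2 * N + cN := by
      linear_combination cN * hη
    have e2 : (1 + δ) / 2 * (S + 2 * η * cS) = (1 + δ) / 2 * S + cS := by
      linear_combination cS * hη
    linarith
  -- bound (1+δ)/2 * S via RIP lower bound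
  have hS : (1 + δ) / 2 * S ≤ 1 / 2 * ‖A (Xstar - Xt)‖ ^ 2
      + δ / (1 - δ) * ‖A (Xstar - Xt)‖ ^ 2 := by
    have hSle : S ≤ ‖A (Xstar - Xt)‖ ^ 2 / (1 - δ) :=
      (le_div_iff₀ h1δ).mpr (by linarith [hRS])
    have h := mul_le_mul_of_nonneg_left hSle (by positivity : (0:ℝ) ≤ (1 + δ) / 2)
    have e : (1 + δ) / 2 * (‖A (Xstar - Xt)‖ ^ 2 / (1 - δ))
        = 1 / 2 * ‖A (Xstar - Xt)‖ ^ 2 + δ / (1 - δ) * ‖A (Xstar - Xt)‖ ^ 2 := by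
      field_simp; ring
    linarith
  rw [hexp Xnext, hexp Xstar]
  have hRN' : 1 / 2 * ‖A (Xnext - Xt)‖ ^ 2 ≤ (1 + δ) / 2 * N := by linarith
  linarith
end

section
/- Suppose the rank-2k restricted isometry constant of a linear map A satisfies δ_{2k} < 1/3, and b = A(X*) for a matrix X* of rank at most k. Define the SVP iterates by X⁰ = 0 and X^{t+1} = P_k(X^t - (1/(1+δ_{2k})) A^T(A(X^t) - b)). Then ψ(X^{t+1}) ≤ (2δ_{2k}/(1-δ_{2k})) · ψ(X^t) for all t, where ψ(X) = ½‖A(X)-b‖²; in particular ψ(X^t) → 0 geometrically with ratio 2δ_{2k}/(1-δ_{2k}) < 1. -/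
open scoped BigOperators RealInnerProductSpace

lemma matRank_sub_le {m n : ℕ} (A B : Matrix (Fin m) (Fin n) ℝ) :
    (A - B).rank ≤ A.rank + B.rank := by
  have hr : (A - B).mulVecLin = A.mulVecLin - B.mulVecLin := by
    ext v i
    simp [Matrix.mulVecLin, Matrix.sub_mulVec]
  have hsub : LinearMap.range (A - B).mulVecLin ≤
      LinearMap.range A.mulVecLin ⊔ LinearMap.range B.mulVecLin := by
    rintro x ⟨v, rfl⟩
    rw [hr]
    exact Submodule.sub_mem _ (Submodule.mem_sup_left ⟨v, rfl⟩)
      (Submodule.mem_sup_right ⟨v, rfl⟩)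
  calc (A - B).rank ≤ Module.finrank ℝ
        (LinearMap.range A.mulVecLin ⊔ LinearMap.range B.mulVecLin : Submodule ℝ _) :=
        Submodule.finrank_mono hsub
    _ ≤ A.rank + B.rank := Submodule.finrank_add_le_finrank_add_finrank _ _

lemma froSq_neg {m n : ℕ} (X : Matrix (Fin m) (Fin n) ℝ) : froSq (-X) = froSq X := by
  simp [froSq]

lemma froSq_smul {m n : ℕ} (c : ℝ) (X : Matrix (Fin m) (Fin n) ℝ) :
    froSq (c • X) = c ^ 2 * froSq X := by
  simp [froSq, mul_pow, Finset.mul_sum]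

lemma frobInner_comm {m n : ℕ} (X Y : Matrix (Fin m) (Fin n) ℝ) :
    frobInner X Y = frobInner Y X := by
  simp [frobInner, mul_comm]

lemma frobInner_smul_right {m n : ℕ} (c : ℝ) (X Y : Matrix (Fin m) (Fin n) ℝ) :
    frobInner X (c • Y) = c * frobInner X Y := by
  simp only [frobInner, Matrix.smul_apply, smul_eq_mul, Finset.mul_sum]
  exact Finset.sum_congr rfl fun i _ => Finset.sum_congr rfl fun j _ => by ring

lemma froSq_add {m n : ℕ} (U V : Matrix (Fin m) (Fin n) ℝ) :
    froSq (U + V) = froSq U + 2 * frobInner U V + froSq V := by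
  simp only [froSq, frobInner, Matrix.add_apply, add_sq, Finset.sum_add_distrib,
    Finset.mul_sum]
  ring

lemma fro_le {m n : ℕ} {U V : Matrix (Fin m) (Fin n) ℝ} (h : fro U ≤ fro V) :
    froSq U ≤ froSq V := by
  have hU : froSq U = fro U ^ 2 := (Real.sq_sqrt (froSq_nonneg U)).symm
  have hV : froSq V = fro V ^ 2 := (Real.sq_sqrt (froSq_nonneg V)).symm
  rw [hU, hV]
  exact pow_le_pow_left₀ (Real.sqrt_nonneg _) h 2

lemma csq {m n : ℕ} (c : ℝ) (hc : c ≠ 0) (G W : Matrix (Fin m) (Fin n) ℝ) :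
    frobInner G W + c / 2 * froSq W
      = c / 2 * froSq (W + (1 / c) • G) - 1 / (2 * c) * froSq G := by
  rw [froSq_add, frobInner_smul_right, froSq_smul, frobInner_comm W G]
  field_simp
  ring

theorem svp_geometric_convergence {m n d k : ℕ} (δ : ℝ) (hδ0 : 0 ≤ δ)
    (hδ : δ < 1 / 3)
    (A : Matrix (Fin m) (Fin n) ℝ →ₗ[ℝ] EuclideanSpace ℝ (Fin d))
    (AT : EuclideanSpace ℝ (Fin d) →ₗ[ℝ] Matrix (Fin m) (Fin n) ℝ)
    (hAT : ∀ (X : Matrix (Fin m) (Fin n) ℝ) (v : EuclideanSpace ℝ (Fin d)),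
      ⟪A X, v⟫ = frobInner (AT v) X)
    (hRIP : ∀ Z : Matrix (Fin m) (Fin n) ℝ, Z.rank ≤ 2 * k →
      (1 - δ) * froSq Z ≤ ‖A Z‖ ^ 2 ∧ ‖A Z‖ ^ 2 ≤ (1 + δ) * froSq Z)
    (Xstar : Matrix (Fin m) (Fin n) ℝ) (hstar : Xstar.rank ≤ k)
    (b : EuclideanSpace ℝ (Fin d)) (hb : b = A Xstar)
    (X : ℕ → Matrix (Fin m) (Fin n) ℝ) (hX0 : X 0 = 0)
    (hrank : ∀ t, (X (t + 1)).rank ≤ k)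
    (hproj : ∀ t, ∀ Z : Matrix (Fin m) (Fin n) ℝ, Z.rank ≤ k →
      fro (X t - (1 / (1 + δ)) • AT (A (X t) - b) - X (t + 1)) ≤
        fro (X t - (1 / (1 + δ)) • AT (A (X t) - b) - Z)) :
    (∀ t, (1 / 2) * ‖A (X (t + 1)) - b‖ ^ 2 ≤
        (2 * δ / (1 - δ)) * ((1 / 2) * ‖A (X t) - b‖ ^ 2)) ∧
      2 * δ / (1 - δ) < 1 := by
  have h1δ : (0:ℝ) < 1 + δ := by linarith
  have h1mδ : (0:ℝ) < 1 - δ := by linarith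
  constructor
  · intro t
    set r : EuclideanSpace ℝ (Fin d) := A (X t) - b with hr
    set G : Matrix (Fin m) (Fin n) ℝ := AT r with hGdef
    set g : Matrix (Fin m) (Fin n) ℝ := (1 / (1 + δ)) • G with hgdef
    set D : Matrix (Fin m) (Fin n) ℝ := X (t + 1) - X t with hD
    set R : Matrix (Fin m) (Fin n) ℝ := Xstar - X t with hR
    have hXt : (X t).rank ≤ k := by
      cases t with
      | zero => simp [hX0, Matrix.rank_zero]
      | succ s => exact hrank s
    have hXt1 := hrank t
    have hDrank : D.rank ≤ 2 * k := by
      calc D.rank ≤ (X (t+1)).rank + (X t).rank := matRank_sub_le _ _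
        _ ≤ 2 * k := by omega
    have hRrank : R.rank ≤ 2 * k := by
      calc R.rank ≤ Xstar.rank + (X t).rank := matRank_sub_le _ _
        _ ≤ 2 * k := by omega
    have hU := (hRIP D hDrank).2
    have hL := (hRIP R hRrank).1
    have hAR : A R = -r := by
      rw [hR, map_sub, ← hb, hr]; abel
    have hinner : ∀ W : Matrix (Fin m) (Fin n) ℝ, ⟪A W, r⟫ = frobInner G W :=
      fun W => hAT W r
    have hexp : ‖A (X (t+1)) - b‖ ^ 2 = ‖r‖ ^ 2 + 2 * frobInner G D + ‖A D‖ ^ 2 := by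
      have h : A (X (t+1)) - b = r + A D := by rw [hr, hD, map_sub]; abel
      rw [h, @norm_add_sq_real, real_inner_comm, hinner D]
    have hpr : froSq (D + g) ≤ froSq (R + g) := by
      have h := fro_le (hproj t Xstar hstar)
      have e1 : X t - (1 / (1 + δ)) • AT (A (X t) - b) - X (t+1) = -(D + g) := by
        simp only [hD, hgdef, hGdef, hr]; abel
      have e2 : X t - (1 / (1 + δ)) • AT (A (X t) - b) - Xstar = -(R + g) := by
        simp only [hR, hgdef, hGdef, hr]; abel
      rw [e1, e2, froSq_neg, froSq_neg] at h
      exact h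
    have key : frobInner G D + (1+δ)/2 * froSq D
        ≤ frobInner G R + (1+δ)/2 * froSq R := by
      have h1 := csq (1+δ) (ne_of_gt h1δ) G D
      have h2 := csq (1+δ) (ne_of_gt h1δ) G R
      rw [hgdef] at hpr
      rw [h1, h2]
      nlinarith [hpr, h1δ]
    have hGR : frobInner G R = -‖r‖ ^ 2 := by
      have h := hinner R
      rw [hAR] at h
      rw [← h, inner_neg_left, real_inner_self_eq_norm_sq]
    rw [hAR, norm_neg] at hL
    have h4 : ‖A (X (t+1)) - b‖ ^ 2 ≤ -‖r‖ ^ 2 + (1+δ) * froSq R := by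
      rw [hexp]
      linarith [hU, key, hGR]
    have hrw : (2 * δ / (1 - δ)) * ((1/2) * ‖r‖ ^ 2) = (δ * ‖r‖ ^ 2) / (1 - δ) := by
      ring
    rw [hrw, le_div_iff₀ h1mδ]
    have m1 : (1-δ) * ‖A (X (t+1)) - b‖ ^ 2 ≤ (1-δ) * (-‖r‖ ^ 2 + (1+δ) * froSq R) :=
      mul_le_mul_of_nonneg_left h4 h1mδ.le
    have m2 : (1+δ) * ((1-δ) * froSq R) ≤ (1+δ) * ‖r‖ ^ 2 :=
      mul_le_mul_of_nonneg_left hL h1δ.le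
    linarith only [m1, m2]
  · rw [div_lt_one h1mδ]
    linarith
end
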